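/- arXiv:2011.09806 — 7 statements merged into one kernel-verified Lean document; each statement's English description precedes it below -/
import Mathlib

section
/- Let i, j, k, l be integers with 0 < i < k ≤ j < l, and set r = k − i, c = l − j; assume r < c < k. Let p, q be integers with 0 < q < p ≤ r + 1 and p − q ≤ k − c. Then the following identity holds in ℚ(t): P_{k−q+1}/(P_{k−p+1}·P_{p−q}) = Σ_{s=q+1}^{p−1} [ (P_{k−c}/(P_{p−s}·P_{k−c−p+s})) · (P_{c−q+1}/(P_{s−q}·P_{c−s+1})) · t^{2(p−s)(c+1−s)} ] + (P_{k−c}/(P_{p−q}·P_{k−c−p+q})) · t^{2(p−q)(c+1−q)} + P_{c−q+1}/(P_{p−q}·P_{c−p+1}). -/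
open Polynomial

/-- `hpoly α = 1 + t^2 + ⋯ + t^{2α}` for `α ≥ 0`. -/
noncomputable def hpoly (α : ℤ) : Polynomial ℚ :=
  ∑ m ∈ Finset.range (α.toNat + 1), X ^ (2 * m)

/-- `Ppoly 0 = 1` and `Ppoly α = hpoly 0 ⋯ hpoly (α-1)` for `α > 0`. -/
noncomputable def Ppoly (α : ℤ) : Polynomial ℚ :=
  ∏ m ∈ Finset.range α.toNat, hpoly (m : ℤ)

/-- The image of `hpoly α` in the field of rational functions `ℚ(t)`. -/
noncomputable def hQ (α : ℤ) : RatFunc ℚ :=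
  algebraMap (Polynomial ℚ) (RatFunc ℚ) (hpoly α)

/-- The image of `Ppoly α` in the field of rational functions `ℚ(t)`. -/
noncomputable def PQ (α : ℤ) : RatFunc ℚ :=
  algebraMap (Polynomial ℚ) (RatFunc ℚ) (Ppoly α)

/-- The variable `t` of `ℚ(t)`. -/
noncomputable def tQ : RatFunc ℚ := RatFunc.X

/-!
With `x = t²`, `h_α = 1 + x + ⋯ + x^α` is the `x`-integer `[α + 1]_x` and `P_α = [α]_x!` is the
`x`-factorial, so every quotient `P_a / (P_b P_{a-b})` in the identity is a Gaussian binomial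
coefficient. The identity is then the `x`-analogue of Vandermonde's convolution
`[m + n choose K] = ∑_{a + b = K} [m choose a] [n choose b] x^{(m - a) b}`
with `m = c - q + 1`, `n = k - c`, `K = p - q`, reindexed by `a = s - q`, `b = p - s`;
the two terms outside the sum are its summands at `s = q` and `s = p`.
-/

open Finset

section Semiring
variable {R : Type*} [Semiring R] (x : R)

def qBinom : ℕ → ℕ → R
  | _, 0 => 1
  | 0, _ + 1 => 0
  | n + 1, k + 1 => qBinom n k + x ^ (k + 1) * qBinom n (k + 1)

@[simp] theorem qBinom_zero_right (n : ℕ) : qBinom x n 0 = 1 := by cases n <;> rfl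

@[simp] theorem qBinom_zero_succ (k : ℕ) : qBinom x 0 (k + 1) = 0 := rfl

theorem qBinom_succ_succ (n k : ℕ) :
    qBinom x (n + 1) (k + 1) = qBinom x n k + x ^ (k + 1) * qBinom x n (k + 1) := rfl

theorem qBinom_eq_zero_of_lt {n k : ℕ} (h : n < k) : qBinom x n k = 0 := by
  induction n generalizing k with
  | zero => obtain ⟨k, rfl⟩ := Nat.exists_eq_add_one_of_ne_zero h.ne'; rfl
  | succ n ih =>
    obtain ⟨k, rfl⟩ := Nat.exists_eq_add_one_of_ne_zero (Nat.ne_zero_of_lt h)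
    rw [qBinom_succ_succ, ih (by omega), ih (by omega), mul_zero, add_zero]

@[simp] theorem qBinom_self (n : ℕ) : qBinom x n n = 1 := by
  induction n with
  | zero => rfl
  | succ n ih =>
    rw [qBinom_succ_succ, ih, qBinom_eq_zero_of_lt x n.lt_succ_self, mul_zero, add_zero]

end Semiring

section CommSemiring
variable {R : Type*} [CommSemiring R] (x : R)

def qFactorial (n : ℕ) : R :=
  ∏ i ∈ range n, ∑ j ∈ range (i + 1), x ^ j

theorem geom_sum_range_add (m n : ℕ) :
    ∑ i ∈ range (m + n), x ^ i = ∑ i ∈ range m, x ^ i + x ^ m * ∑ i ∈ range n, x ^ i := by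
  simp only [sum_range_add, pow_add, mul_sum]

theorem qFactorial_succ (n : ℕ) :
    qFactorial x (n + 1) = qFactorial x n * ∑ j ∈ range (n + 1), x ^ j :=
  prod_range_succ _ _

theorem map_qFactorial {S : Type*} [CommSemiring S] (f : R →+* S) (n : ℕ) :
    f (qFactorial x n) = qFactorial (f x) n := by
  simp [qFactorial, map_prod, map_sum, map_pow]

theorem qFactorial_one (n : ℕ) : qFactorial (1 : R) n = n.factorial := by
  rw [← prod_range_add_one_eq_factorial, Nat.cast_prod]
  simp [qFactorial]

theorem qFactorial_ne_zero_of_map_eq_one {S : Type*} [CommSemiring S] [CharZero S]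
    (f : R →+* S) (hx : f x = 1) (n : ℕ) : qFactorial x n ≠ 0 := fun h => by
  simpa [h, hx, qFactorial_one, n.factorial_ne_zero, eq_comm] using map_qFactorial x f n

theorem qBinom_add_mul_qFactorial (a b : ℕ) :
    qBinom x (a + b) a * qFactorial x a * qFactorial x b = qFactorial x (a + b) := by
  induction b generalizing a with
  | zero => simp [qFactorial]
  | succ b ihb =>
    induction a with
    | zero => simp [qFactorial]
    | succ a iha =>
      set N := a + (b + 1)
      set A := ∑ i ∈ range (a + 1), x ^ i
      set B := ∑ i ∈ range (b + 1), x ^ i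
      have hN : a + 1 + (b + 1) = N + 1 := by omega
      have hgeom : ∑ i ∈ range (N + 1), x ^ i = A + x ^ (a + 1) * B := by
        rw [← hN, geom_sum_range_add]
      have h := ihb (a + 1)
      rw [show a + 1 + b = N by omega] at h
      rw [qFactorial_succ] at iha h
      calc qBinom x (a + 1 + (b + 1)) (a + 1) * qFactorial x (a + 1) * qFactorial x (b + 1)
          = A * (qBinom x N a * qFactorial x a * (qFactorial x b * B))
            + x ^ (a + 1) * B * (qBinom x N (a + 1) * (qFactorial x a * A) * qFactorial x b) := by
            rw [hN, qBinom_succ_succ, qFactorial_succ x a, qFactorial_succ x b]; ring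
        _ = qFactorial x (a + 1 + (b + 1)) := by
            rw [iha, h, hN, qFactorial_succ, hgeom]; ring

-- For `m ≤ a` the binomial vanishes, so the truncated `m - (a + 1)` does no harm.
theorem pow_mul_qBinom_shift {m a b k : ℕ} (hk : a + b = k) :
    x ^ (k + 1) * (qBinom x m (a + 1) * x ^ ((m - (a + 1)) * b))
      = x ^ (a + 1) * qBinom x m (a + 1) * x ^ ((m - a) * b) := by
  rcases lt_or_ge a m with ham | ham
  · obtain ⟨e, rfl⟩ := Nat.exists_eq_add_of_lt ham
    rw [show a + e + 1 - (a + 1) = e by omega, show a + e + 1 - a = e + 1 by omega, ← hk]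
    ring
  · rw [qBinom_eq_zero_of_lt x (by omega)]
    ring

theorem qBinom_add (m n k : ℕ) :
    qBinom x (m + n) k
      = ∑ ab ∈ antidiagonal k, qBinom x m ab.1 * qBinom x n ab.2 * x ^ ((m - ab.1) * ab.2) := by
  induction m generalizing k with
  | zero =>
    cases k with
    | zero => simp
    | succ k => simp [Nat.sum_antidiagonal_succ]
  | succ m ih =>
    cases k with
    | zero => simp
    | succ k =>
      have hshift : ∀ ab ∈ antidiagonal k,
          x ^ (k + 1) * (qBinom x m (ab.1 + 1) * qBinom x n ab.2 * x ^ ((m - (ab.1 + 1)) * ab.2))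
            = x ^ (ab.1 + 1) * qBinom x m (ab.1 + 1) * qBinom x n ab.2 * x ^ ((m - ab.1) * ab.2) :=
        fun ab hab => by
          calc _ = qBinom x n ab.2 * (x ^ (k + 1)
                  * (qBinom x m (ab.1 + 1) * x ^ ((m - (ab.1 + 1)) * ab.2))) := by ring
            _ = _ := by rw [pow_mul_qBinom_shift x (mem_antidiagonal.1 hab)]; ring
      rw [show m + 1 + n = m + n + 1 by omega, qBinom_succ_succ, ih, ih, Nat.sum_antidiagonal_succ,
        Nat.sum_antidiagonal_succ, mul_add, mul_sum, sum_congr rfl hshift]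
      simp only [qBinom_succ_succ, Nat.add_sub_add_right, qBinom_zero_right, Nat.sub_zero, add_mul,
        sum_add_distrib]
      ring

end CommSemiring

theorem qBinom_add_eq_div {K : Type*} [Field K] (x : K) (hx : ∀ n, qFactorial x n ≠ 0)
    (a b : ℕ) : qBinom x (a + b) a = qFactorial x (a + b) / (qFactorial x a * qFactorial x b) := by
  rw [eq_div_iff (mul_ne_zero (hx a) (hx b)), ← mul_assoc, qBinom_add_mul_qFactorial]

theorem sum_Icc_eq_sum_antidiagonal {M : Type*} [AddCommMonoid M] {q p : ℤ} (h : q ≤ p)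
    (f : ℕ × ℕ → M) :
    ∑ s ∈ Icc q p, f ((s - q).toNat, (p - s).toNat) = ∑ ab ∈ antidiagonal (p - q).toNat, f ab := by
  refine sum_nbij' (fun s => ((s - q).toNat, (p - s).toNat)) (fun ab => q + ab.1) ?_ ?_ ?_ ?_ ?_
  all_goals intro _ hmem
  all_goals simp only [mem_Icc, HasAntidiagonal.mem_antidiagonal, Prod.ext_iff] at hmem ⊢
  all_goals omega

theorem Int.sum_Icc_eq_add_sum_Icc_add {M : Type*} [AddCommMonoid M] {q p : ℤ} (h : q < p)
    (f : ℤ → M) : ∑ s ∈ Icc q p, f s = f q + ∑ s ∈ Icc (q + 1) (p - 1), f s + f p := by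
  rw [Icc_eq_cons_Ioc h.le, sum_cons, Ioc_eq_cons_Ioo h, sum_cons, Icc_add_one_sub_one_eq_Ioo]
  abel

theorem Ppoly_eq_qFactorial (α : ℤ) : Ppoly α = qFactorial (X ^ 2) α.toNat := by
  simp [Ppoly, hpoly, qFactorial, pow_mul]

theorem PQ_eq_qFactorial (α : ℤ) : PQ α = qFactorial (tQ ^ 2) α.toNat := by
  rw [PQ, Ppoly_eq_qFactorial, map_qFactorial, map_pow, RatFunc.algebraMap_X, tQ]

theorem qFactorial_tQ_sq_ne_zero (n : ℕ) : qFactorial (tQ ^ 2) n ≠ 0 := by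
  rw [tQ, ← RatFunc.algebraMap_X, ← map_pow, ← map_qFactorial,
    map_ne_zero_iff _ (RatFunc.algebraMap_injective ℚ)]
  exact qFactorial_ne_zero_of_map_eq_one _ (Polynomial.evalRingHom 1) (by simp) n

theorem PQ_ne_zero (α : ℤ) : PQ α ≠ 0 := by
  rw [PQ_eq_qFactorial]
  exact qFactorial_tQ_sq_ne_zero _

theorem PQ_zero : PQ 0 = 1 := by
  simp [PQ_eq_qFactorial, qFactorial]

theorem PQ_div_eq_qBinom {a b d : ℤ} (hb : 0 ≤ b) (hd : 0 ≤ d) (h : b + d = a) :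
    PQ a / (PQ b * PQ d) = qBinom (tQ ^ 2) a.toNat b.toNat := by
  lift b to ℕ using hb
  lift d to ℕ using hd
  subst h
  simp only [PQ_eq_qFactorial, Int.toNat_natCast, ← Nat.cast_add]
  rw [qBinom_add_eq_div _ qFactorial_tQ_sq_ne_zero]

theorem pow_two_mul_mul_toNat {M : Type*} [Monoid M] (y : M) {a b : ℤ} (ha : 0 ≤ a)
    (hb : 0 ≤ b) :
    y ^ (2 * a * b).toNat = (y ^ 2) ^ (b.toNat * a.toNat) := by
  rw [Int.toNat_mul (by omega) hb, Int.toNat_mul (by norm_num) ha, ← pow_mul]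
  simp only [Int.reduceToNat]
  ring_nf

theorem summand_eq_qBinom {k c p q s : ℤ} (hqs : q ≤ s) (hsp : s ≤ p) (hpc : p ≤ c + 1)
    (hpq : p - q ≤ k - c) :
    PQ (k - c) / (PQ (p - s) * PQ (k - c - p + s)) *
        (PQ (c - q + 1) / (PQ (s - q) * PQ (c - s + 1))) * tQ ^ (2 * (p - s) * (c + 1 - s)).toNat
      = qBinom (tQ ^ 2) (c - q + 1).toNat (s - q).toNat
          * qBinom (tQ ^ 2) (k - c).toNat (p - s).toNat * (tQ ^ 2) ^ (((c - q + 1).toNat - (s - q).toNat) * (p - s).toNat) := by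
  rw [PQ_div_eq_qBinom (by omega) (by omega) (by ring),
    PQ_div_eq_qBinom (by omega) (by omega) (by ring), pow_two_mul_mul_toNat _ (by omega) (by omega),
    show (c - q + 1).toNat - (s - q).toNat = (c + 1 - s).toNat by omega]
  ring

theorem local_polynomial_identity_general
    (k r c p q : ℤ)
    (hrc : r < c)
    (hqp : q < p) (hpr : p ≤ r + 1) (hpq : p - q ≤ k - c) :
    PQ (k - q + 1) / (PQ (k - p + 1) * PQ (p - q)) =
      (∑ s ∈ Finset.Icc (q + 1) (p - 1),
        (PQ (k - c) / (PQ (p - s) * PQ (k - c - p + s))) *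
          (PQ (c - q + 1) / (PQ (s - q) * PQ (c - s + 1))) *
          tQ ^ (2 * (p - s) * (c + 1 - s)).toNat) +
      PQ (k - c) / (PQ (p - q) * PQ (k - c - p + q)) *
        tQ ^ (2 * (p - q) * (c + 1 - q)).toNat +
      PQ (c - q + 1) / (PQ (p - q) * PQ (c - p + 1)) := by
  have hpc : p ≤ c + 1 := by omega
  have hfirst := summand_eq_qBinom (s := q) le_rfl hqp.le hpc hpq
  have hlast := summand_eq_qBinom (s := p) hqp.le le_rfl hpc hpq
  simp only [sub_self, PQ_zero, one_mul, mul_one, mul_zero, zero_mul, Int.toNat_zero, pow_zero,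
    sub_add_cancel, div_self (PQ_ne_zero _)] at hfirst hlast
  rw [mul_comm (PQ (k - p + 1)), PQ_div_eq_qBinom (by omega) (by omega) (by ring),
    show (k - q + 1).toNat = (c - q + 1).toNat + (k - c).toNat by omega, qBinom_add,
    ← sum_Icc_eq_sum_antidiagonal hqp.le, Int.sum_Icc_eq_add_sum_Icc_add hqp,
    sum_congr rfl fun s hs => summand_eq_qBinom (by grind) (by grind) hpc hpq, hfirst, hlast]
  simp only [sub_self, Int.toNat_zero, mul_zero, pow_zero, mul_one]
  abel

/-- The local polynomial identity (Theorem 3.1). -/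
theorem local_polynomial_identity
    (i j k l r c p q : ℤ)
    (hi : 0 < i) (hik : i < k) (hkj : k ≤ j) (hjl : j < l)
    (hr : r = k - i) (hc : c = l - j) (hrc : r < c) (hck : c < k)
    (hq : 0 < q) (hqp : q < p) (hpr : p ≤ r + 1) (hpq : p - q ≤ k - c) :
    PQ (k - q + 1) / (PQ (k - p + 1) * PQ (p - q)) =
      (∑ s ∈ Finset.Icc (q + 1) (p - 1),
        (PQ (k - c) / (PQ (p - s) * PQ (k - c - p + s))) *
          (PQ (c - q + 1) / (PQ (s - q) * PQ (c - s + 1))) *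
          tQ ^ (2 * (p - s) * (c + 1 - s)).toNat) +
      PQ (k - c) / (PQ (p - q) * PQ (k - c - p + q)) *
        tQ ^ (2 * (p - q) * (c + 1 - q)).toNat +
      PQ (c - q + 1) / (PQ (p - q) * PQ (c - p + 1)) :=
  local_polynomial_identity_general k r c p q hrc hqp hpr hpq
end

section
/- For all integers i, j with i ≥ 3 and j ≥ i + 2 the following identity holds in ℚ(t): h_{j+1−i}·h_{j+2−i}·h_i·h_{i+1}/(h_j·h_{j+1}·h_1·h_2) − t^4·h_1·h_{i−2}·h_{j−i−1}/(h_{j+1}·h_1) − t^{12}·h_{i−3}·h_{i−2}·h_{j−i−2}·h_{j−i−1}/(h_1·h_2·h_j·h_{j+1}) = 1. -/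
open Polynomial

/-!
With `q = t ^ 2`, the geometric sum `h_α` equals `(q ^ (α + 1) - 1) / (q - 1)` for `α ≥ 0`. Taking
this closed form as the definition of `h_α` for every integer `α`, the identity makes sense over any
field, and after clearing denominators it is a polynomial identity in `q`, `q ^ i`, `q ^ j` and
`(q ^ i)⁻¹`, valid for all integers `i` and `j`.
-/

-- `1 + q + ⋯ + q ^ α` for `α ≥ 0`, extended to all integers `α` by its closed form.
def zGeomSum {K : Type*} [DivisionRing K] (q : K) (α : ℤ) : K := (q ^ (α + 1) - 1) / (q - 1)

theorem zGeomSum_F_three_eq_one {K : Type*} [Field K] {q : K} (hq0 : q ≠ 0) (hq1 : q ≠ 1) {i j : ℤ}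
    (h_j : zGeomSum q j ≠ 0) (h_succ_j : zGeomSum q (j + 1) ≠ 0)
    (h_one : zGeomSum q 1 ≠ 0) (h_two : zGeomSum q 2 ≠ 0) :
    zGeomSum q (j + 1 - i) * zGeomSum q (j + 2 - i) * zGeomSum q i * zGeomSum q (i + 1) /
        (zGeomSum q j * zGeomSum q (j + 1) * zGeomSum q 1 * zGeomSum q 2) -
      q ^ 2 * zGeomSum q 1 * zGeomSum q (i - 2) * zGeomSum q (j - i - 1) /
        (zGeomSum q (j + 1) * zGeomSum q 1) -
      q ^ 6 * zGeomSum q (i - 3) * zGeomSum q (i - 2) * zGeomSum q (j - i - 2) *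
          zGeomSum q (j - i - 1) /
        (zGeomSum q 1 * zGeomSum q 2 * zGeomSum q j * zGeomSum q (j + 1)) = 1 := by
  field_simp
  have hu : q ^ i ≠ 0 := zpow_ne_zero i hq0
  simp only [zGeomSum, zpow_add₀ hq0, zpow_sub₀ hq0, zpow_ofNat]
  generalize q ^ i = u at *
  generalize q ^ j = v
  field_simp
  ring

theorem hpoly_natCast_mul_X_sq_sub_one (n : ℕ) :
    hpoly n * (X ^ 2 - 1) = (X ^ 2) ^ (n + 1) - 1 := by
  simp only [hpoly, Int.toNat_natCast, pow_mul]
  exact geom_sum_mul _ _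

theorem hpoly_ne_zero (α : ℤ) : hpoly α ≠ 0 := fun h =>
  Nat.cast_add_one_ne_zero (R := ℚ) α.toNat <| by
    simpa [hpoly, eval_finsetSum] using congrArg (eval 1) h

theorem hQ_ne_zero (α : ℤ) : hQ α ≠ 0 := by
  simpa [hQ] using hpoly_ne_zero α

theorem tQ_sq_sub_one_ne_zero : tQ ^ 2 - 1 ≠ 0 := by
  have : (X ^ 2 - 1 : ℚ[X]) ≠ 0 := fun h => by simpa using congrArg (eval 0) h
  simpa [tQ] using RatFunc.algebraMap_ne_zero this

theorem hQ_eq_zGeomSum {α : ℤ} (hα : 0 ≤ α) : hQ α = zGeomSum (tQ ^ 2) α := by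
  lift α to ℕ using hα
  rw [zGeomSum, eq_div_iff tQ_sq_sub_one_ne_zero, ← Nat.cast_add_one, zpow_natCast]
  simpa [hQ, tQ] using congrArg (algebraMap ℚ[X] (RatFunc ℚ)) (hpoly_natCast_mul_X_sq_sub_one α)

/-- The claim `F(i,j,3) = 1` of the Appendix. -/
theorem F_i_j_three_eq_one (i j : ℤ) (hi : 3 ≤ i) (hj : j ≥ i + 2) :
    hQ (j + 1 - i) * hQ (j + 2 - i) * hQ i * hQ (i + 1) /
        (hQ j * hQ (j + 1) * hQ 1 * hQ 2) -
      tQ ^ 4 * hQ 1 * hQ (i - 2) * hQ (j - i - 1) / (hQ (j + 1) * hQ 1) -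
      tQ ^ 12 * hQ (i - 3) * hQ (i - 2) * hQ (j - i - 2) * hQ (j - i - 1) /
        (hQ 1 * hQ 2 * hQ j * hQ (j + 1)) = 1 := by
  have h_ne {α : ℤ} (hα : 0 ≤ α) : zGeomSum (tQ ^ 2) α ≠ 0 :=
    hQ_eq_zGeomSum hα ▸ hQ_ne_zero α
  have hq1 : tQ ^ 2 ≠ 1 := sub_ne_zero.1 tQ_sq_sub_one_ne_zero
  rw [show tQ ^ 4 = (tQ ^ 2) ^ 2 by ring, show tQ ^ 12 = (tQ ^ 2) ^ 6 by ring]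
  simp (disch := omega) only [hQ_eq_zGeomSum]
  exact zGeomSum_F_three_eq_one (pow_ne_zero 2 RatFunc.X_ne_zero) hq1
    (h_ne (by omega)) (h_ne (by omega)) (h_ne (by omega)) (h_ne (by omega))
end

section
/- For integers i, j, c with 2 ≤ c ≤ i and j ≥ i + 2, define F(i,j,c) ∈ ℚ(t) by F(i,j,c) := h_{j+c−i−2}·h_{j+c−i−1}·h_i·h_{i+1}/(h_j·h_{j+1}·h_{c−2}·h_{c−1}) − t^{2(c−1)}·h_1·h_{i−c+1}·h_{j−i−1}/(h_{j+1}·h_{c−2}) − t^{4c}·h_{i−c}·h_{i−c+1}·h_{j−i−2}·h_{j−i−1}/(h_{c−2}·h_{c−1}·h_j·h_{j+1}). Then for all integers i, j, c with 4 ≤ c ≤ i and j ≥ i + 2 one has F(i,j,c) = F(i,j,c−1). -/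
open Polynomial

/-- `F(i,j,c)`: the reduced form of identity (5.3) of the Appendix. -/
noncomputable def Ffun (i j c : ℤ) : RatFunc ℚ :=
  hQ (j + c - i - 2) * hQ (j + c - i - 1) * hQ i * hQ (i + 1) /
      (hQ j * hQ (j + 1) * hQ (c - 2) * hQ (c - 1)) -
    tQ ^ (2 * (c - 1)).toNat * hQ 1 * hQ (i - c + 1) * hQ (j - i - 1) /
      (hQ (j + 1) * hQ (c - 2)) -
    tQ ^ (4 * c).toNat * hQ (i - c) * hQ (i - c + 1) * hQ (j - i - 2) *
        hQ (j - i - 1) /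
      (hQ (c - 2) * hQ (c - 1) * hQ j * hQ (j + 1))

/-!
With `q = t ^ 2` one has `h_α = (q ^ (α + 1) - 1) / (q - 1)`, so `F(i,j,c)` is a rational function
`Fq q X Y Z` of `q` and the monomials `X = q ^ i`, `Y = q ^ j`, `Z = q ^ c`, and lowering `c` by one
is the substitution `Z ↦ Z / q`. The identity `Fq q X Y Z = Fq q X Y (Z / q)` holds in any field
as soon as the denominators `h_j, h_{j+1}, h_{c-1}, h_{c-2}, h_{c-3}` are nonzero: clearing them
leaves a polynomial identity. In `ℚ(t)` they are nonzero because `t` is not a root of unity.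
-/

section

variable {K : Type*} [Field K]

/-- `qNum q (q ^ n)` is the `q`-integer `[n]_q`, so that `h_α = qNum q (q ^ (α + 1))`. -/
def qNum (q x : K) : K := (x - 1) / (q - 1)

def Fq (q X Y Z : K) : K :=
  qNum q (Y * Z / (X * q)) * qNum q (Y * Z / X) * qNum q (X * q) * qNum q (X * q ^ 2) /
      (qNum q (Y * q) * qNum q (Y * q ^ 2) * qNum q (Z / q) * qNum q Z) -
    Z / q * qNum q (q ^ 2) * qNum q (X * q ^ 2 / Z) * qNum q (Y / X) /
      (qNum q (Y * q ^ 2) * qNum q (Z / q)) -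
    Z ^ 2 * qNum q (X * q / Z) * qNum q (X * q ^ 2 / Z) * qNum q (Y / (X * q)) *
        qNum q (Y / X) /
      (qNum q (Z / q) * qNum q Z * qNum q (Y * q) * qNum q (Y * q ^ 2))

theorem Fq_eq_Fq_div {q X Y Z : K} (hq : q ≠ 0) (hq1 : q ≠ 1) (hX : X ≠ 0) (hZ : Z ≠ 0)
    (hY1 : Y * q ≠ 1) (hY2 : Y * q ^ 2 ≠ 1) (hZ0 : Z ≠ 1) (hZ1 : Z ≠ q) (hZ2 : Z ≠ q ^ 2) :
    Fq q X Y Z = Fq q X Y (Z / q) := by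
  have hq1' : q - 1 ≠ 0 := sub_ne_zero.2 hq1
  have hY1' : Y * q - 1 ≠ 0 := sub_ne_zero.2 hY1
  have hY2' : Y * q ^ 2 - 1 ≠ 0 := sub_ne_zero.2 hY2
  have hZ0' : Z - 1 ≠ 0 := sub_ne_zero.2 hZ0
  have hZ1' : Z - q ≠ 0 := sub_ne_zero.2 hZ1
  have hZ2' : Z - q ^ 2 ≠ 0 := sub_ne_zero.2 hZ2
  unfold Fq qNum
  field_simp
  ring

end

lemma tQ_sq_zpow_ne_one {n : ℤ} (hn : n ≠ 0) : (tQ ^ 2) ^ n ≠ 1 := by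
  obtain ⟨m, rfl | rfl⟩ := Int.eq_nat_or_neg n
  all_goals
    intro h
    have hX : (X : ℚ[X]) ^ (2 * m) = 1 :=
      RatFunc.algebraMap_injective ℚ (by simpa [tQ, pow_mul] using h)
    have hdeg := congrArg natDegree hX
    rw [natDegree_X_pow, natDegree_one] at hdeg
    omega

lemma hQ_eq_qNum {α : ℤ} (hα : 0 ≤ α) : hQ α = qNum (tQ ^ 2) ((tQ ^ 2) ^ (α + 1)) := by
  have hgeom : hpoly α * (X ^ 2 - 1) = (X ^ 2) ^ (α.toNat + 1) - 1 := by
    simpa only [hpoly, pow_mul] using geom_sum_mul ((X : ℚ[X]) ^ 2) (α.toNat + 1)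
  have hq1 : (tQ ^ 2 - 1 : RatFunc ℚ) ≠ 0 := by
    simpa [sub_eq_zero] using tQ_sq_zpow_ne_one one_ne_zero
  rw [qNum, eq_div_iff hq1, show α + 1 = ((α.toNat + 1 : ℕ) : ℤ) by omega, zpow_natCast]
  simpa [hQ, tQ] using congrArg (algebraMap ℚ[X] (RatFunc ℚ)) hgeom

lemma tQ_pow_toNat_two_mul {n : ℤ} (hn : 0 ≤ n) : tQ ^ (2 * n).toNat = (tQ ^ 2) ^ n := by
  rw [← zpow_natCast, Int.toNat_of_nonneg (by omega), zpow_mul, zpow_ofNat]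

lemma Ffun_eq_Fq {i j c : ℤ} (h2c : 2 ≤ c) (hci : c ≤ i) (hij : i + 2 ≤ j) :
    Ffun i j c = Fq (tQ ^ 2) ((tQ ^ 2) ^ i) ((tQ ^ 2) ^ j) ((tQ ^ 2) ^ c) := by
  have hq : (tQ ^ 2 : RatFunc ℚ) ≠ 0 := pow_ne_zero 2 RatFunc.X_ne_zero
  rw [Ffun, Fq, show 4 * c = 2 * (c * 2) by ring]
  simp (disch := omega) only [hQ_eq_qNum, tQ_pow_toNat_two_mul, zpow_mul, one_add_one_eq_two,
    zpow_ofNat, sub_add_cancel]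
  generalize tQ ^ 2 = q at *
  -- both sides now have the same shape; the leaves are identities between monomials in `q`
  congr
  all_goals simp only [zpow_add₀ hq, zpow_sub₀ hq, zpow_ofNat] <;> field_simp

/-- The inductive step in `c`: `F(i,j,c) = F(i,j,c-1)`. -/
theorem Ffun_inductive_step (i j c : ℤ) (hc : 4 ≤ c) (hci : c ≤ i)
    (hj : j ≥ i + 2) :
    Ffun i j c = Ffun i j (c - 1) := by
  have hq : (tQ ^ 2 : RatFunc ℚ) ≠ 0 := pow_ne_zero 2 RatFunc.X_ne_zero
  have hne {n : ℤ} (hn : n ≠ 0) := tQ_sq_zpow_ne_one hn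
  rw [Ffun_eq_Fq (by omega) hci (by omega), Ffun_eq_Fq (by omega) (by omega) (by omega),
    zpow_sub₀ hq, zpow_one]
  apply Fq_eq_Fq_div hq
  · simpa using hne (n := 1) one_ne_zero
  · exact zpow_ne_zero i hq
  · exact zpow_ne_zero c hq
  · simpa [zpow_add_one₀ hq] using hne (n := j + 1) (by omega)
  · simpa [zpow_add₀ hq] using hne (n := j + 2) (by omega)
  · exact hne (by omega)
  · simpa [zpow_sub_one₀ hq, mul_inv_eq_one₀ hq] using hne (n := c - 1) (by omega)
  · simpa [zpow_sub₀ hq, div_eq_one_iff_eq (pow_ne_zero 2 hq)] using hne (n := c - 2) (by omega)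
end

section
/- Let i, j, c be integers with 4 ≤ c ≤ i and j ≥ i + 2. Define the polynomials Q_0 := h_{j+c−i−2}·h_{j+c−i−1}·h_i·h_{i+1}·h_{c−3} − h_{j+c−i−3}·h_{j+c−i−2}·h_i·h_{i+1}·h_{c−1}, Q_1 := −t^{2(c−1)}·h_1·h_{i−c+1}·h_{j−i−1}·h_j·h_{c−1}·h_{c−3} + t^{2(c−2)}·h_1·h_{i−c+2}·h_{j−i−1}·h_j·h_{c−1}·h_{c−2}, and Q_2 := −t^{4c}·h_{i−c}·h_{i−c+1}·h_{j−i−2}·h_{j−i−1}·h_{c−3} + t^{4(c−1)}·h_{i−c+1}·h_{i−c+2}·h_{j−i−2}·h_{j−i−1}·h_{c−1}. Then Q_0 + Q_1 + Q_2 = 0 in ℚ[t]. -/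
open Polynomial

/-! Multiplying by `t² - 1` turns `h_α` into `t^(2α+2) - 1`. So in `ℚ(t)` every `h_α` is the quotient
`(t^(2α+2) - 1) / (t² - 1)`, and once the indices are written as natural numbers
`a = i - c`, `b = j - i - 2`, `d = c - 4` the claim is an identity between rational expressions
in `t`, `t^a`, `t^b`, `t^d` that ring normalization checks. -/

lemma hpoly_mul_X_sq_sub_one (α : ℤ) : hpoly α * (X ^ 2 - 1) = X ^ (2 * α.toNat + 2) - 1 := by
  simp only [hpoly, pow_mul]
  rw [geom_sum_mul]
  ring

lemma hpoly_one : hpoly 1 = 1 + X ^ 2 := by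
  simp [hpoly, Finset.sum_range_succ]

lemma RatFunc.X_sq_sub_one_ne_zero (K : Type*) [Field K] : (RatFunc.X : RatFunc K) ^ 2 - 1 ≠ 0 := by
  rw [← RatFunc.algebraMap_X, ← map_pow, ← map_one (algebraMap K[X] (RatFunc K)), ← map_sub]
  exact (map_ne_zero_iff _ (IsFractionRing.injective K[X] (RatFunc K))).2
    (by simpa using X_pow_sub_C_ne_zero two_pos (1 : K))

lemma algebraMap_hpoly (n : ℕ) :
    algebraMap ℚ[X] (RatFunc ℚ) (hpoly n) =
      (RatFunc.X ^ (2 * n + 2) - 1) / (RatFunc.X ^ 2 - 1) := by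
  rw [eq_div_iff (RatFunc.X_sq_sub_one_ne_zero ℚ), ← RatFunc.algebraMap_X]
  simpa using congrArg (algebraMap ℚ[X] (RatFunc ℚ)) (hpoly_mul_X_sq_sub_one n)

theorem Q_sum_eq_zero_of_nat (a b d : ℕ) :
    (hpoly ↑(b + d + 4) * hpoly ↑(b + d + 5) * hpoly ↑(a + d + 4) * hpoly ↑(a + d + 5) *
        hpoly ↑(d + 1) -
      hpoly ↑(b + d + 3) * hpoly ↑(b + d + 4) * hpoly ↑(a + d + 4) * hpoly ↑(a + d + 5) *
        hpoly ↑(d + 3)) +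
    (-(X : ℚ[X]) ^ (2 * d + 6) * hpoly 1 * hpoly ↑(a + 1) *
        hpoly ↑(b + 1) * hpoly ↑(a + b + d + 6) * hpoly ↑(d + 3) * hpoly ↑(d + 1) +
      X ^ (2 * d + 4) * hpoly 1 * hpoly ↑(a + 2) * hpoly ↑(b + 1) *
        hpoly ↑(a + b + d + 6) * hpoly ↑(d + 3) * hpoly ↑(d + 2)) +
    (-(X : ℚ[X]) ^ (4 * d + 16) * hpoly ↑a * hpoly ↑(a + 1) *
        hpoly ↑b * hpoly ↑(b + 1) * hpoly ↑(d + 1) +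
      X ^ (4 * d + 12) * hpoly ↑(a + 1) * hpoly ↑(a + 2) *
        hpoly ↑b * hpoly ↑(b + 1) * hpoly ↑(d + 3)) = 0 := by
  apply IsFractionRing.injective ℚ[X] (RatFunc ℚ)
  -- `h₁` stays a polynomial, so that every term carries exactly the factor `(t² - 1)⁻⁵`.
  rw [hpoly_one]
  simp only [map_add, map_sub, map_mul, map_neg, map_pow, map_zero, map_one,
    RatFunc.algebraMap_X, algebraMap_hpoly]
  ring

/-- `Q₀ + Q₁ + Q₂ = 0`: the cleared-denominator form of the inductive step
`F(i,j,c) - F(i,j,c-1) = 0` in the Appendix. -/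
theorem Q_sum_eq_zero (i j c : ℤ) (hc : 4 ≤ c) (hci : c ≤ i) (hj : j ≥ i + 2) :
    (hpoly (j + c - i - 2) * hpoly (j + c - i - 1) * hpoly i * hpoly (i + 1) *
        hpoly (c - 3) -
      hpoly (j + c - i - 3) * hpoly (j + c - i - 2) * hpoly i * hpoly (i + 1) *
        hpoly (c - 1)) +
    (-(X : Polynomial ℚ) ^ (2 * (c - 1)).toNat * hpoly 1 * hpoly (i - c + 1) *
        hpoly (j - i - 1) * hpoly j * hpoly (c - 1) * hpoly (c - 3) +
      X ^ (2 * (c - 2)).toNat * hpoly 1 * hpoly (i - c + 2) * hpoly (j - i - 1) *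
        hpoly j * hpoly (c - 1) * hpoly (c - 2)) +
    (-(X : Polynomial ℚ) ^ (4 * c).toNat * hpoly (i - c) * hpoly (i - c + 1) *
        hpoly (j - i - 2) * hpoly (j - i - 1) * hpoly (c - 3) +
      X ^ (4 * (c - 1)).toNat * hpoly (i - c + 1) * hpoly (i - c + 2) *
        hpoly (j - i - 2) * hpoly (j - i - 1) * hpoly (c - 1)) = 0 := by
  convert Q_sum_eq_zero_of_nat (i - c).toNat (j - i - 2).toNat (c - 4).toNat <;> omega
end

section
/- Let i, j be integers with i ≥ 4 and j ≥ i + 2. Define the polynomials G_0 := h_i·h_{j−i+2}·(h_{i+1}·h_{j−i+1} − h_{i−1}·h_{j−i+3}), G_1 := −t^4·h_j·h_1·h_2·(h_{i−2}·h_{j−i−1} − h_{i−3}·h_{j−i}), and G_2 := −t^{12}·h_{j−i−1}·h_{i−3}·(h_{j−i−2}·h_{i−2} − h_{j−i}·h_{i−4}). Then G_0 + G_1 + G_2 = 0 in ℚ[t]. -/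
open Polynomial

/-!
Since `(t² - 1) h_α = t^(2α+2) - 1`, multiplying `G₀ + G₁ + G₂` by `(t² - 1)⁵` turns it into a
polynomial in `t²`, `t^(2i)` and `t^(2j)` whose vanishing is a ring identity. As `t² - 1` is
monic, it is a non-zero-divisor and may be cancelled.
-/

/-- `g n` plays the role of `h_n = [n + 1]_u`, and `i = p + 4`, `j = p + q + 6`. -/
theorem appendix_identity {R : Type*} [CommRing R] {u : R} (hu : u - 1 ∈ nonZeroDivisors R)
    {g : ℕ → R} (hg : ∀ n, g n * (u - 1) = u ^ (n + 1) - 1) (p q : ℕ) :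
    g (p + 4) * g (q + 4) * (g (p + 5) * g (q + 3) - g (p + 3) * g (q + 5)) +
      (-u ^ 2 * g (p + q + 6) * g 1 * g 2 * (g (p + 2) * g (q + 1) - g (p + 1) * g (q + 2))) +
      (-u ^ 6 * g (q + 1) * g (p + 1) * (g q * g (p + 2) - g (q + 2) * g p)) = 0 := by
  refine (mul_right_mem_nonZeroDivisors_eq_zero_iff (pow_mem hu 5)).mp ?_
  set e := fun n => g n * (u - 1) with he
  calc _ = e (p + 4) * e (q + 4) * (e (p + 5) * e (q + 3) - e (p + 3) * e (q + 5)) * (u - 1) +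
      -u ^ 2 * e (p + q + 6) * e 1 * e 2 * (e (p + 2) * e (q + 1) - e (p + 1) * e (q + 2)) +
      -u ^ 6 * e (q + 1) * e (p + 1) * (e q * e (p + 2) - e (q + 2) * e p) * (u - 1) := by
        simp only [he]; ring
    _ = 0 := by simp only [he, hg]; ring

theorem X_sq_sub_one_mem_nonZeroDivisors : (X ^ 2 - 1 : ℚ[X]) ∈ nonZeroDivisors ℚ[X] := by
  simpa using (monic_X_pow_sub_C (1 : ℚ) two_ne_zero).mem_nonZeroDivisors

/-- `G₀ + G₁ + G₂ = 0`: the cleared-denominator form of the inductive step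
`F(i,j,3) - F(i-1,j,3) = 0` in the Appendix. -/
theorem G_sum_eq_zero (i j : ℤ) (hi : 4 ≤ i) (hj : j ≥ i + 2) :
    hpoly i * hpoly (j - i + 2) *
        (hpoly (i + 1) * hpoly (j - i + 1) - hpoly (i - 1) * hpoly (j - i + 3)) +
      (-(X : Polynomial ℚ) ^ 4 * hpoly j * hpoly 1 * hpoly 2 *
        (hpoly (i - 2) * hpoly (j - i - 1) - hpoly (i - 3) * hpoly (j - i))) +
      (-(X : Polynomial ℚ) ^ 12 * hpoly (j - i - 1) * hpoly (i - 3) *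
        (hpoly (j - i - 2) * hpoly (i - 2) - hpoly (j - i) * hpoly (i - 4))) =
      0 := by
  obtain ⟨p, rfl⟩ : ∃ p : ℕ, i = p + 4 := ⟨(i - 4).toNat, by omega⟩
  obtain ⟨q, rfl⟩ : ∃ q : ℕ, j = p + q + 6 := ⟨(j - p - 6).toNat, by omega⟩
  have key := appendix_identity X_sq_sub_one_mem_nonZeroDivisors
    hpoly_natCast_mul_X_sq_sub_one p q
  push_cast at key
  -- `ring_nf` also normalises the indices inside `hpoly`, so `i + 1` meets `↑(p + 5)` etc.
  ring_nf at key ⊢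
  exact key
end

section
/- For integers i, j, r with i ≥ 2, j ≥ i + 2 and r ≥ 2, define FF(i,j,r) ∈ ℚ(t) by FF(i,j,r) := h_{j−1}·h_{j−2}·h_{r+i−1}·h_{r+i−2}/(h_{i−1}·h_{i−2}·h_{r+j−1}·h_{r+j−2}) − t^{2(i−1)}·h_{r−1}·h_1·h_{j−i−1}/(h_{r+j−1}·h_{i−2}) − t^{4i}·h_{r−2}·h_{r−1}·h_{j−i−2}·h_{j−i−1}/(h_{r+j−2}·h_{r+j−1}·h_{i−2}·h_{i−1}). Then FF(i,j,r) = 1. -/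
open Polynomial

/-- `FF(i,j,r)`: the reduced form of identity (5.4) of the Appendix. -/
noncomputable def FFfun (i j r : ℤ) : RatFunc ℚ :=
  hQ (j - 1) * hQ (j - 2) * hQ (r + i - 1) * hQ (r + i - 2) /
      (hQ (i - 1) * hQ (i - 2) * hQ (r + j - 1) * hQ (r + j - 2)) -
    tQ ^ (2 * (i - 1)).toNat * hQ (r - 1) * hQ 1 * hQ (j - i - 1) /
      (hQ (r + j - 1) * hQ (i - 2)) -
    tQ ^ (4 * i).toNat * hQ (r - 2) * hQ (r - 1) * hQ (j - i - 2) *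
        hQ (j - i - 1) /
      (hQ (r + j - 2) * hQ (r + j - 1) * hQ (i - 2) * hQ (i - 1))

/-!
Put `y = t²`. Each `h_α` is the geometric sum `(y^(α+1) - 1) / (y - 1)`, and since `t` is
transcendental no `y^n - 1` with `n ≠ 0` vanishes. Writing `i = p + 2`, `j = p + q + 4`,
`r = s + 2` with `p q s : ℕ`, clearing denominators turns `FF(i,j,r) = 1` into a polynomial
identity in `t`, `t^p`, `t^q`, `t^s`.
-/

theorem Transcendental.pow_ne_one {R A : Type*} [CommRing R] [Nontrivial R] [Ring A]
    [Algebra R A] {y : A} (hy : Transcendental R y) {n : ℕ} (hn : n ≠ 0) : y ^ n ≠ 1 :=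
  fun h => hy.pow (Nat.pos_of_ne_zero hn) (h ▸ isAlgebraic_one)

theorem RatFunc.X_pow_ne_one {K : Type*} [Field K] {n : ℕ} (hn : n ≠ 0) :
    (RatFunc.X : RatFunc K) ^ n ≠ 1 :=
  RatFunc.transcendental_X.pow_ne_one hn

def evenGeomSum {K : Type*} [Field K] (t : K) (n : ℕ) : K :=
  ∑ m ∈ Finset.range (n + 1), t ^ (2 * m)

section EvenGeomSum

variable {K : Type*} [Field K] {t : K}

theorem evenGeomSum_eq_div (ht : t ^ 2 ≠ 1) (n : ℕ) :
    evenGeomSum t n = ((t ^ 2) ^ (n + 1) - 1) / (t ^ 2 - 1) := by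
  simp only [evenGeomSum, pow_mul, geom_sum_eq ht]

theorem evenGeomSum_ff_identity (ht : ∀ n ≠ 0, t ^ n ≠ 1) (p q s : ℕ) :
    evenGeomSum t (p + q + 3) * evenGeomSum t (p + q + 2) * evenGeomSum t (p + s + 3) *
          evenGeomSum t (p + s + 2) /
        (evenGeomSum t (p + 1) * evenGeomSum t p * evenGeomSum t (p + q + s + 5) *
          evenGeomSum t (p + q + s + 4)) -
      t ^ (2 * (p + 1)) * evenGeomSum t (s + 1) * evenGeomSum t 1 * evenGeomSum t (q + 1) /
        (evenGeomSum t (p + q + s + 5) * evenGeomSum t p) -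
      t ^ (4 * (p + 2)) * evenGeomSum t s * evenGeomSum t (s + 1) * evenGeomSum t q *
          evenGeomSum t (q + 1) /
        (evenGeomSum t (p + q + s + 4) * evenGeomSum t (p + q + s + 5) * evenGeomSum t p *
          evenGeomSum t (p + 1)) =
      1 := by
  have ht2 : t ^ 2 - 1 ≠ 0 := sub_ne_zero.2 (ht 2 two_ne_zero)
  have hd : ∀ n, (t ^ 2) ^ (n + 1) - 1 ≠ 0 := fun n =>
    sub_ne_zero.2 (by rw [← pow_mul]; exact ht _ (by omega))
  have := hd p
  have := hd (p + 1)
  have := hd (p + q + s + 4)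
  have := hd (p + q + s + 5)
  simp only [evenGeomSum_eq_div (ht 2 two_ne_zero)]
  field_simp
  ring

end EvenGeomSum

theorem hQ_eq_evenGeomSum (α : ℤ) : hQ α = evenGeomSum tQ α.toNat := by
  simp only [hQ, hpoly, evenGeomSum, map_sum, map_pow, RatFunc.algebraMap_X, tQ]

/-- The reduced identity `FF(i,j,r) = 1`. -/
theorem FFfun_eq_one (i j r : ℤ) (hi : 2 ≤ i) (hj : j ≥ i + 2) (hr : 2 ≤ r) :
    FFfun i j r = 1 := by
  obtain ⟨p, rfl⟩ : ∃ p : ℕ, i = p + 2 := ⟨(i - 2).toNat, by omega⟩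
  obtain ⟨q, rfl⟩ : ∃ q : ℕ, j = p + q + 4 := ⟨(j - p - 4).toNat, by omega⟩
  obtain ⟨s, rfl⟩ : ∃ s : ℕ, r = s + 2 := ⟨(r - 2).toNat, by omega⟩
  simp only [FFfun, hQ_eq_evenGeomSum]
  -- what is left are index equations such as `(↑p + ↑q + 4 - 1).toNat = p + q + 3`
  convert evenGeomSum_ff_identity (t := tQ) (fun _ => RatFunc.X_pow_ne_one) p q s <;> omega
end

section
/- Let i, j, r be integers with i ≥ 2, j ≥ i + 2 and r ≥ 3. Define the polynomials H_0 := h_{r+j−3}·h_{j−1}·h_{j−2}·h_{r+i−1}·h_{r+i−2} − h_{r+j−1}·h_{j−1}·h_{j−2}·h_{r+i−2}·h_{r+i−3}, H_1 := t^{2(i−1)}·h_{r+j−1}·h_{r−2}·h_1·h_{j−i−1}·h_{i−1}·h_{r+j−3} − t^{2(i−1)}·h_{r+j−3}·h_{r−1}·h_1·h_{j−i−1}·h_{i−1}·h_{r+j−2}, and H_2 := t^{4i}·h_{r+j−1}·h_{r−3}·h_{r−2}·h_{j−i−2}·h_{j−i−1} − t^{4i}·h_{r+j−3}·h_{r−2}·h_{r−1}·h_{j−i−2}·h_{j−i−1}.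 Then H_0 + H_1 + H_2 = 0 in ℚ[t]. -/
open Polynomial

/-! With `q = t²` one has `h_α = [α + 1]_q = (q^{α+1} - 1)/(q - 1)`, so over a field with `q ≠ 1`
the identity is one between rational functions of `q` and of `q^i, q^j, q^r`, and clearing the
denominators reduces it to a ring identity. Because it has integer coefficients, knowing it for the
variable of `ℤ[X]`, inside the fraction field, gives it for every `q` in every commutative ring. -/

open Finset

section QNumber

variable {R S : Type*} [CommRing R] [CommRing S]

def qNumber (q : R) (n : ℕ) : R :=
  ∑ m ∈ range n, q ^ m

/-- `H₀ + H₁ + H₂` with `t² = q`, `h_α = [α + 1]_q`, `i = a + 2`, `j = a + b + 4`, `r = c + 3`. -/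
def stepDefect (q : R) (a b c : ℕ) : R :=
  (qNumber q (a + b + c + 5) * qNumber q (a + b + 4) * qNumber q (a + b + 3) *
        qNumber q (a + c + 5) * qNumber q (a + c + 4) -
      qNumber q (a + b + c + 7) * qNumber q (a + b + 4) * qNumber q (a + b + 3) *
        qNumber q (a + c + 4) * qNumber q (a + c + 3)) +
    (q ^ (a + 1) * qNumber q (a + b + c + 7) * qNumber q (c + 2) * qNumber q 2 *
        qNumber q (b + 2) * qNumber q (a + 2) * qNumber q (a + b + c + 5) -
      q ^ (a + 1) * qNumber q (a + b + c + 5) * qNumber q (c + 3) * qNumber q 2 *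
        qNumber q (b + 2) * qNumber q (a + 2) * qNumber q (a + b + c + 6)) +
    (q ^ (2 * a + 4) * qNumber q (a + b + c + 7) * qNumber q (c + 1) * qNumber q (c + 2) *
        qNumber q (b + 1) * qNumber q (b + 2) -
      q ^ (2 * a + 4) * qNumber q (a + b + c + 5) * qNumber q (c + 2) * qNumber q (c + 3) *
        qNumber q (b + 1) * qNumber q (b + 2))

theorem map_qNumber (f : R →+* S) (q : R) (n : ℕ) : f (qNumber q n) = qNumber (f q) n := by
  simp only [qNumber, map_sum, map_pow]

theorem map_stepDefect (f : R →+* S) (q : R) (a b c : ℕ) :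
    f (stepDefect q a b c) = stepDefect (f q) a b c := by
  simp only [stepDefect, map_add, map_sub, map_mul, map_pow, map_qNumber]

theorem stepDefect_eq_zero_of_ne_one {K : Type*} [Field K] {q : K} (hq : q ≠ 1) (a b c : ℕ) :
    stepDefect q a b c = 0 := by
  have hq' : q - 1 ≠ 0 := sub_ne_zero.mpr hq
  simp only [stepDefect, qNumber, geom_sum_eq hq]
  field_simp
  ring

theorem stepDefect_eq_zero (q : R) (a b c : ℕ) : stepDefect q a b c = 0 := by
  have hX : stepDefect (X : ℤ[X]) a b c = 0 := by
    have hinj := IsFractionRing.injective ℤ[X] (FractionRing ℤ[X])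
    have hX_ne_one : algebraMap ℤ[X] (FractionRing ℤ[X]) X ≠ 1 := by
      simpa using hinj.ne (X_ne_C 1)
    apply hinj
    rw [map_stepDefect, map_zero, stepDefect_eq_zero_of_ne_one hX_ne_one]
  simpa [map_stepDefect] using congrArg (eval₂RingHom (Int.castRingHom R) q) hX

end QNumber

theorem hpoly_eq_qNumber {α : ℤ} (hα : 0 ≤ α) : hpoly α = qNumber (X ^ 2) (α + 1).toNat := by
  rw [hpoly, qNumber, Int.toNat_add hα zero_le_one]
  simp only [pow_mul, Int.toNat_one]

/-- `H₀ + H₁ + H₂ = 0`: the cleared-denominator form of the inductive step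
`FF(i,j,r) - FF(i,j,r-1) = 0` in the Appendix. -/
theorem H_sum_eq_zero (i j r : ℤ) (hi : 2 ≤ i) (hj : j ≥ i + 2) (hr : 3 ≤ r) :
    (hpoly (r + j - 3) * hpoly (j - 1) * hpoly (j - 2) * hpoly (r + i - 1) *
        hpoly (r + i - 2) -
      hpoly (r + j - 1) * hpoly (j - 1) * hpoly (j - 2) * hpoly (r + i - 2) *
        hpoly (r + i - 3)) +
    ((X : Polynomial ℚ) ^ (2 * (i - 1)).toNat * hpoly (r + j - 1) *
        hpoly (r - 2) * hpoly 1 * hpoly (j - i - 1) * hpoly (i - 1) *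
        hpoly (r + j - 3) -
      X ^ (2 * (i - 1)).toNat * hpoly (r + j - 3) * hpoly (r - 1) * hpoly 1 *
        hpoly (j - i - 1) * hpoly (i - 1) * hpoly (r + j - 2)) +
    ((X : Polynomial ℚ) ^ (4 * i).toNat * hpoly (r + j - 1) * hpoly (r - 3) *
        hpoly (r - 2) * hpoly (j - i - 2) * hpoly (j - i - 1) -
      X ^ (4 * i).toNat * hpoly (r + j - 3) * hpoly (r - 2) * hpoly (r - 1) *
        hpoly (j - i - 2) * hpoly (j - i - 1)) = 0 := by
  have h := stepDefect_eq_zero ((X : ℚ[X]) ^ 2) (i - 2).toNat (j - i - 2).toNat (r - 3).toNat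
  simp only [stepDefect, ← pow_mul] at h
  simp (disch := omega) only [hpoly_eq_qNumber]
  convert h using 12 <;> omega
end
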